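/- Let 0 < α < 1, T > 0, C_b > 0, and let H be a real inner product space. Then there exists C > 0 (depending only on α, T, C_b) such that the following holds for every h ∈ (0,1). Suppose w : ℕ → ℝ satisfies w_0 > 0, w_j < 0 for j ≥ 1 and ∑_{j=0}^{n} w_j ≥ 0 for all n, and b : ℕ → ℝ satisfies ∑_{i=0}^{m} w_i b_{m−i} = 1 if m = 0 and = 0 for m ≥ 1, with |b_0| ≤ C_b h^{α} and |b_j| ≤ C_b h^{α} j^{α−1} for j ≥ 1. Let (U^n)_{n≥0} be a sequence in H with U^0 = 0, and let (g_n)_{n≥1} be nonnegative reals with h^{α} ∑_{j=0}^{n−1} (n−j)^{α−1} g_{j+1} ≤ F for every n ≥ 1 with nh ≤ T, for some F ≥ 0. If ⟨ ∑_{j=0}^{n} w_{n−j} U^j , U^n ⟩ ≤ g_n ‖U^n‖ for every n ≥ 1 with nh ≤ T, then ‖U^n‖ ≤ C F for every n ≥ 1 with nh ≤ T. -/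

import Mathlib

/-!
With `a m = ‖U m‖`, testing with `U m` and using `w j ≤ 0` for `j ≥ 1` turns the energy inequality
into the scalar one `(w ⋆ a) m ≤ g m`. The convolution inverse `b` of such a `w` is nonnegative, so
convolving with `b` preserves it: `a n = (b ⋆ w ⋆ a) n ≤ (b ⋆ g) n`, the `m = 0` term vanishing
because `U 0 = 0`. Finally `k ^ (α - 1) ≤ 2 ^ (1 - α) * (k + 1) ^ (α - 1)` for `k ≥ 1` makes the
bound on `b` a bound by the Riemann–Liouville kernel, and `(b ⋆ g) n ≤ 2 ^ (1 - α) * Cb * F`.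
-/

open Finset PowerSeries RealInnerProductSpace

theorem PowerSeries.coeff_mul_eq_sum_range {R : Type*} [CommSemiring R] (n : ℕ) (φ ψ : R⟦X⟧) :
    coeff n (φ * ψ) = ∑ k ∈ range (n + 1), coeff (n - k) φ * coeff k ψ := by
  rw [coeff_mul, ← Nat.sum_antidiagonal_swap, Nat.sum_antidiagonal_eq_sum_range_succ_mk]
  rfl

theorem PowerSeries.mk_mul_mk_eq_one {R : Type*} [CommSemiring R] {w b : ℕ → R}
    (h0 : w 0 * b 0 = 1) (h1 : ∀ m, 1 ≤ m → ∑ i ∈ range (m + 1), w i * b (m - i) = 0) :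
    mk w * mk b = 1 := by
  ext m
  rw [coeff_mul, Nat.sum_antidiagonal_eq_sum_range_succ_mk, coeff_one]
  simp only [coeff_mk]
  rcases Nat.eq_zero_or_pos m with rfl | hm
  · simpa using h0
  · rw [if_neg hm.ne', h1 m hm]

theorem sum_mul_sum_eq_self_of_mk_mul_mk_eq_one {R : Type*} [CommSemiring R] {w b : ℕ → R}
    (hwb : mk w * mk b = 1) (a : ℕ → R) (n : ℕ) :
    ∑ m ∈ range (n + 1), b (n - m) * ∑ j ∈ range (m + 1), w (m - j) * a j = a n := by
  have : mk b * (mk w * mk a) = mk a := by rw [← mul_assoc, mul_comm (mk b), hwb, one_mul]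
  simpa only [coeff_mul_eq_sum_range, coeff_mk] using congrArg (coeff n) this

theorem nonneg_of_mk_mul_mk_eq_one {w b : ℕ → ℝ} (hw0 : 0 < w 0) (hw : ∀ j, 1 ≤ j → w j ≤ 0)
    (hwb : mk w * mk b = 1) (m : ℕ) : 0 ≤ b m := by
  induction m using Nat.strong_induction_on with
  | _ m ih =>
    have hcoeff := congrArg (coeff m) hwb
    rw [coeff_mul_eq_sum_range, sum_range_succ, coeff_one] at hcoeff
    simp only [coeff_mk, Nat.sub_self] at hcoeff
    have hrest : ∑ k ∈ range m, w (m - k) * b k ≤ 0 :=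
      sum_nonpos fun k hk => mul_nonpos_of_nonpos_of_nonneg
        (hw _ (by have := mem_range.mp hk; omega)) (ih k (mem_range.mp hk))
    have hsplit : 0 ≤ w 0 * b m := by split_ifs at hcoeff <;> linarith
    exact nonneg_of_mul_nonneg_right hsplit hw0

theorem le_sum_mul_of_conv_le {w b a g : ℕ → ℝ} (hwb : mk w * mk b = 1) (hb : ∀ k, 0 ≤ b k)
    (ha0 : a 0 = 0) (n : ℕ)
    (hwa : ∀ m, 1 ≤ m → m ≤ n → ∑ j ∈ range (m + 1), w (m - j) * a j ≤ g m) :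
    a n ≤ ∑ j ∈ range n, b (n - (j + 1)) * g (j + 1) := by
  rw [← sum_mul_sum_eq_self_of_mk_mul_mk_eq_one hwb a n, sum_range_succ']
  simp only [zero_add, range_one, sum_singleton, ha0, mul_zero, add_zero]
  exact sum_le_sum fun j hj =>
    mul_le_mul_of_nonneg_left (hwa (j + 1) (by omega) (mem_range.mp hj)) (hb _)

theorem Real.rpow_le_two_rpow_neg_mul_add_one_rpow {β x : ℝ} (hβ : β ≤ 0) (hx : 1 ≤ x) :
    x ^ β ≤ 2 ^ (-β) * (x + 1) ^ β := by
  have h2x : (2 * x) ^ β ≤ (x + 1) ^ β :=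
    Real.rpow_le_rpow_of_nonpos (by linarith) (by linarith) hβ
  calc x ^ β = 2 ^ (-β) * (2 * x) ^ β := by
        rw [Real.mul_rpow zero_le_two (by linarith), ← mul_assoc, ← Real.rpow_add two_pos,
          neg_add_cancel, Real.rpow_zero, one_mul]
    _ ≤ 2 ^ (-β) * (x + 1) ^ β := by gcongr

theorem le_two_rpow_neg_mul_succ_rpow {b : ℕ → ℝ} {β c : ℝ} (hβ : β ≤ 0) (hc : 0 ≤ c)
    (hb0 : b 0 ≤ c) (hb : ∀ j, 1 ≤ j → b j ≤ c * (j : ℝ) ^ β) (k : ℕ) :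
    b k ≤ 2 ^ (-β) * c * ((k + 1 : ℕ) : ℝ) ^ β := by
  rcases Nat.eq_zero_or_pos k with rfl | hk
  · have : 1 ≤ (2 : ℝ) ^ (-β) := Real.one_le_rpow one_le_two (by linarith)
    simp only [zero_add, Nat.cast_one, Real.one_rpow, mul_one]
    nlinarith
  · calc b k ≤ c * (k : ℝ) ^ β := hb k hk
      _ ≤ c * (2 ^ (-β) * ((k : ℝ) + 1) ^ β) := by
          gcongr
          exact Real.rpow_le_two_rpow_neg_mul_add_one_rpow hβ (by exact_mod_cast hk)
      _ = 2 ^ (-β) * c * ((k + 1 : ℕ) : ℝ) ^ β := by push_cast; ring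

section InnerProductSpace

variable {H : Type*} [NormedAddCommGroup H] [InnerProductSpace ℝ H] {w : ℕ → ℝ}

theorem sum_mul_norm_mul_norm_le_inner (hw : ∀ j, 1 ≤ j → w j ≤ 0) (U : ℕ → H) (m : ℕ) :
    (∑ j ∈ range (m + 1), w (m - j) * ‖U j‖) * ‖U m‖
      ≤ ⟪∑ j ∈ range (m + 1), w (m - j) • U j, U m⟫ := by
  rw [sum_inner, sum_mul, sum_range_succ, sum_range_succ, real_inner_smul_left,
    real_inner_self_eq_norm_mul_norm, mul_assoc]
  gcongr with j hj
  rw [real_inner_smul_left, mul_assoc]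
  exact mul_le_mul_of_nonpos_left (real_inner_le_norm _ _)
    (hw _ (by have := mem_range.mp hj; omega))

theorem sum_mul_norm_le_of_inner_le (hw : ∀ j, 1 ≤ j → w j ≤ 0) (U : ℕ → H) {m : ℕ} {g : ℝ}
    (hg : 0 ≤ g) (hU : ⟪∑ j ∈ range (m + 1), w (m - j) • U j, U m⟫ ≤ g * ‖U m‖) :
    ∑ j ∈ range (m + 1), w (m - j) * ‖U j‖ ≤ g := by
  rcases (norm_nonneg (U m)).eq_or_lt with hUm | hUm
  · rw [sum_range_succ, ← hUm, mul_zero, add_zero]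
    refine (sum_nonpos fun j hj => ?_).trans hg
    exact mul_nonpos_of_nonpos_of_nonneg (hw _ (by have := mem_range.mp hj; omega)) (norm_nonneg _)
  · exact le_of_mul_le_mul_right ((sum_mul_norm_mul_norm_le_inner hw U m).trans hU) hUm

end InnerProductSpace

theorem cq_stability_general (α T Cb : ℝ) (hα1 : α < 1) (hCb : 0 < Cb) :
    ∃ C : ℝ, 0 < C ∧
      ∀ (H : Type) [NormedAddCommGroup H] [InnerProductSpace ℝ H],
      ∀ h : ℝ, h ∈ Set.Ioo (0 : ℝ) 1 →
      ∀ w b : ℕ → ℝ, 0 < w 0 → (∀ j : ℕ, 1 ≤ j → w j < 0) →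
      (∀ n : ℕ, 0 ≤ ∑ j ∈ Finset.range (n + 1), w j) →
      w 0 * b 0 = 1 →
      (∀ m : ℕ, 1 ≤ m → ∑ i ∈ Finset.range (m + 1), w i * b (m - i) = 0) →
      |b 0| ≤ Cb * h ^ α → (∀ j : ℕ, 1 ≤ j → |b j| ≤ Cb * h ^ α * (j : ℝ) ^ (α - 1)) →
      ∀ U : ℕ → H, U 0 = 0 →
      ∀ g : ℕ → ℝ, (∀ n : ℕ, 1 ≤ n → 0 ≤ g n) →
      ∀ F : ℝ, 0 ≤ F →
      (∀ n : ℕ, 1 ≤ n → (n : ℝ) * h ≤ T →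
        h ^ α * ∑ j ∈ Finset.range n, ((n - j : ℕ) : ℝ) ^ (α - 1) * g (j + 1) ≤ F) →
      (∀ n : ℕ, 1 ≤ n → (n : ℝ) * h ≤ T →
        ⟪∑ j ∈ Finset.range (n + 1), w (n - j) • U j, U n⟫ ≤ g n * ‖U n‖) →
      ∀ n : ℕ, 1 ≤ n → (n : ℝ) * h ≤ T → ‖U n‖ ≤ C * F := by
  refine ⟨2 ^ (1 - α) * Cb, by positivity, ?_⟩
  intro H _ _ h ⟨hh, _⟩ w b hw0 hw _ hwb0 hwb1 hb0 hb U hU0 g hg F _ hgF hU n hn hnT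
  have hw' : ∀ j, 1 ≤ j → w j ≤ 0 := fun j hj => (hw j hj).le
  have hwb := mk_mul_mk_eq_one hwb0 hwb1
  have hb_le (k : ℕ) : b k ≤ 2 ^ (1 - α) * (Cb * h ^ α) * ((k + 1 : ℕ) : ℝ) ^ (α - 1) := by
    simpa only [neg_sub] using le_two_rpow_neg_mul_succ_rpow (by linarith) (by positivity)
      ((le_abs_self _).trans hb0) (fun j hj => (le_abs_self _).trans (hb j hj)) k
  have henergy (m : ℕ) (hm : 1 ≤ m) (hmn : m ≤ n) :
      ∑ j ∈ range (m + 1), w (m - j) * ‖U j‖ ≤ g m :=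
    sum_mul_norm_le_of_inner_le hw' U (hg m hm) (hU m hm (le_trans (by gcongr) hnT))
  calc ‖U n‖ ≤ ∑ j ∈ range n, b (n - (j + 1)) * g (j + 1) :=
        le_sum_mul_of_conv_le hwb (nonneg_of_mk_mul_mk_eq_one hw0 hw' hwb) (by simp [hU0]) n
          henergy
    _ ≤ ∑ j ∈ range n, 2 ^ (1 - α) * (Cb * h ^ α) * ((n - j : ℕ) : ℝ) ^ (α - 1) * g (j + 1) := by
        gcongr with j hj
        · exact hg _ (by omega)
        · have hjn := mem_range.mp hj
          simpa only [show n - (j + 1) + 1 = n - j by omega] using hb_le (n - (j + 1))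
    _ = 2 ^ (1 - α) * Cb * (h ^ α * ∑ j ∈ range n, ((n - j : ℕ) : ℝ) ^ (α - 1) * g (j + 1)) := by
        rw [mul_sum, mul_sum]
        exact sum_congr rfl fun j _ => by ring
    _ ≤ 2 ^ (1 - α) * Cb * F := by gcongr; exact hgF n hn hnT

/-- Unconditional stability of the CQ scheme via the energy method. For `0 < α < 1`, `T > 0`,
`C_b > 0` there is `C > 0` (depending only on `α, T, C_b`) such that for every real inner
product space `H`, every `h ∈ (0,1)`, admissible CQ weights `w` (with nonnegative partial
sums) whose convolution inverse `b` satisfies `|b_0| ≤ C_b h^α`, `|b_j| ≤ C_b h^α j^{α−1}`,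
every sequence `U` in `H` with `U^0 = 0` and nonnegative reals `g_n` with
`h^α ∑_{j=0}^{n−1}(n−j)^{α−1} g_{j+1} ≤ F` for `nh ≤ T`: if
`⟨∑_{j=0}^{n} w_{n−j} U^j, U^n⟩ ≤ g_n ‖U^n‖` for every `n ≥ 1` with `nh ≤ T`, then
`‖U^n‖ ≤ C F` for every such `n`. -/
theorem cq_stability (α T Cb : ℝ) (hα : 0 < α) (hα1 : α < 1) (hT : 0 < T) (hCb : 0 < Cb) :
    ∃ C : ℝ, 0 < C ∧
      ∀ (H : Type) [NormedAddCommGroup H] [InnerProductSpace ℝ H],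
      ∀ h : ℝ, h ∈ Set.Ioo (0 : ℝ) 1 →
      ∀ w b : ℕ → ℝ, 0 < w 0 → (∀ j : ℕ, 1 ≤ j → w j < 0) →
      (∀ n : ℕ, 0 ≤ ∑ j ∈ Finset.range (n + 1), w j) →
      w 0 * b 0 = 1 →
      (∀ m : ℕ, 1 ≤ m → ∑ i ∈ Finset.range (m + 1), w i * b (m - i) = 0) →
      |b 0| ≤ Cb * h ^ α → (∀ j : ℕ, 1 ≤ j → |b j| ≤ Cb * h ^ α * (j : ℝ) ^ (α - 1)) →
      ∀ U : ℕ → H, U 0 = 0 →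
      ∀ g : ℕ → ℝ, (∀ n : ℕ, 1 ≤ n → 0 ≤ g n) →
      ∀ F : ℝ, 0 ≤ F →
      (∀ n : ℕ, 1 ≤ n → (n : ℝ) * h ≤ T →
        h ^ α * ∑ j ∈ Finset.range n, ((n - j : ℕ) : ℝ) ^ (α - 1) * g (j + 1) ≤ F) →
      (∀ n : ℕ, 1 ≤ n → (n : ℝ) * h ≤ T →
        ⟪∑ j ∈ Finset.range (n + 1), w (n - j) • U j, U n⟫ ≤ g n * ‖U n‖) →
      ∀ n : ℕ, 1 ≤ n → (n : ℝ) * h ≤ T → ‖U n‖ ≤ C * F :=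
  cq_stability_general α T Cb hα1 hCb
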